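/- arXiv:1204.5985 — 5 statements merged into one kernel-verified Lean document; each statement's English description precedes it below -/
import Mathlib

section
/- For all a_L, a_R, ω, λ > 0, the function U(x₀) defined piecewise by U(x₀) = 1/ω + c₁·exp(x₀(√(2ω + a_L²) − a_L)) for x₀ ≤ 0 and U(x₀) = 1/(ω+λ) + c₄·exp(−x₀(√(2(ω+λ) + a_R²) − a_R)) for x₀ ≥ 0, with c₁ = −(1/ω − 1/(ω+λ))·(√(2(ω+λ)+a_R²) − a_R)/(√(2(ω+λ)+a_R²) − a_R + √(2ω+a_L²) − a_L) and c₄ = (1/ω − 1/(ω+λ))·(√(2ω+a_L²) − a_L)/(√(2(ω+λ)+a_R²) − a_R + √(2ω+a_L²) − a_L), is a bounded C¹ solution of the ODE (1/2)U'' + a_L U' − ωU = −1 on x₀ < 0 and (1/2)U'' − a_R U' − (ω+λ)U = −1 on x₀ > 0. -/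
open Real

lemma keyHD (a c b : ℝ) (x : ℝ) :
    HasDerivAt (fun y : ℝ => a + c * Real.exp (y * b)) (c * b * Real.exp (x * b)) x := by
  have h : HasDerivAt (fun y : ℝ => Real.exp (y * b)) (Real.exp (x * b) * (1 * b)) x :=
    ((hasDerivAt_id x).mul_const b).exp
  have h2 := (h.const_mul c).const_add a
  have he : c * b * Real.exp (x * b) = c * (Real.exp (x * b) * (1 * b)) := by ring
  rw [he]; exact h2

lemma keyHD' (a c b : ℝ) (x : ℝ) :
    HasDerivAt (fun y : ℝ => a + c * Real.exp (-y * b)) (-(c * b) * Real.exp (-x * b)) x := by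
  have h := keyHD a c (-b) x
  simpa only [mul_neg, neg_mul] using h

set_option maxHeartbeats 1000000 in
/-- the piecewise function `U` is a bounded C¹ solution of the
transformed Feynman–Kac ODE. -/
theorem stmt0 (aL aR ω lam : ℝ) (hω : 0 < ω) (hlam : 0 < lam)
    (c₁ c₄ : ℝ)
    (hc₁ : c₁ = -(1/ω - 1/(ω + lam)) *
      (Real.sqrt (2*(ω+lam) + aR^2) - aR) /
      (Real.sqrt (2*(ω+lam) + aR^2) - aR + Real.sqrt (2*ω + aL^2) - aL))
    (hc₄ : c₄ = (1/ω - 1/(ω + lam)) *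
      (Real.sqrt (2*ω + aL^2) - aL) /
      (Real.sqrt (2*(ω+lam) + aR^2) - aR + Real.sqrt (2*ω + aL^2) - aL))
    (U : ℝ → ℝ)
    (hU : U = fun x₀ => if x₀ ≤ 0 then
        1/ω + c₁ * Real.exp (x₀ * (Real.sqrt (2*ω + aL^2) - aL))
      else
        1/(ω+lam) + c₄ * Real.exp (-x₀ * (Real.sqrt (2*(ω+lam) + aR^2) - aR))) :
    (∃ M : ℝ, ∀ x₀ : ℝ, |U x₀| ≤ M) ∧
    ContDiff ℝ 1 U ∧
    (∀ x₀ < 0, (1/2) * deriv (deriv U) x₀ + aL * deriv U x₀ - ω * U x₀ = -1) ∧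
    (∀ x₀ > 0, (1/2) * deriv (deriv U) x₀ - aR * deriv U x₀ - (ω+lam) * U x₀ = -1) := by
  have h2ω : (0:ℝ) ≤ 2*ω + aL^2 := by positivity
  have h2ωl : (0:ℝ) ≤ 2*(ω+lam) + aR^2 := by positivity
  set s := Real.sqrt (2*ω + aL^2) with hs_def
  set t := Real.sqrt (2*(ω+lam) + aR^2) with ht_def
  have hs : s^2 = 2*ω + aL^2 := Real.sq_sqrt h2ω
  have ht : t^2 = 2*(ω+lam) + aR^2 := Real.sq_sqrt h2ωl
  have hsn : 0 ≤ s := Real.sqrt_nonneg _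
  have htn : 0 ≤ t := Real.sqrt_nonneg _
  have hβL : 0 < s - aL := by nlinarith [sq_nonneg (s - aL), sq_nonneg (s + aL)]
  have hβR : 0 < t - aR := by nlinarith [sq_nonneg (t - aR), sq_nonneg (t + aR)]
  have hωne : ω ≠ 0 := hω.ne'
  have hωlne : ω + lam ≠ 0 := by positivity
  have hSne : t - aR + s - aL ≠ 0 := by
    have : 0 < t - aR + s - aL := by linarith
    exact this.ne'
  have hval : 1/ω + c₁ = 1/(ω+lam) + c₄ := by
    rw [hc₁, hc₄]; field_simp; ring
  have hder : c₁ * (s - aL) = -(c₄ * (t - aR)) := by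
    rw [hc₁, hc₄]; field_simp
  have hdL : ∀ x : ℝ, HasDerivAt (fun y : ℝ => 1/ω + c₁ * Real.exp (y*(s-aL)))
      (c₁*(s-aL)*Real.exp (x*(s-aL))) x := fun x => keyHD _ _ _ x
  have hdR : ∀ x : ℝ, HasDerivAt (fun y : ℝ => 1/(ω+lam) + c₄ * Real.exp (-y*(t-aR)))
      (-(c₄*(t-aR))*Real.exp (-x*(t-aR))) x := fun x => keyHD' _ _ _ x
  set g : ℝ → ℝ := fun y => if y ≤ 0 then c₁*(s-aL)*Real.exp (y*(s-aL))
    else -(c₄*(t-aR))*Real.exp (-y*(t-aR)) with hg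
  have hUle : ∀ y ≤ (0:ℝ), U y = 1/ω + c₁ * Real.exp (y*(s-aL)) := by
    intro y hy; rw [hU]; simp [hy]
  have hUgt : ∀ y : ℝ, 0 < y → U y = 1/(ω+lam) + c₄ * Real.exp (-y*(t-aR)) := by
    intro y hy; rw [hU]; simp [not_le.mpr hy]
  have hU0R : U 0 = 1/(ω+lam) + c₄ * Real.exp (-0*(t-aR)) := by
    rw [hU]; simp only [le_refl, if_true, zero_mul, neg_zero, Real.exp_zero, mul_one]
    linear_combination hval
  have hUd : ∀ x : ℝ, HasDerivAt U (g x) x := by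
    intro x
    rcases lt_trichotomy x 0 with hx | hx | hx
    · have hgx : g x = c₁*(s-aL)*Real.exp (x*(s-aL)) := by simp [hg, hx.le]
      rw [hgx]
      refine (hdL x).congr_of_eventuallyEq ?_
      filter_upwards [Iio_mem_nhds hx] with y hy using hUle y hy.le
    · subst hx
      have hgx : g 0 = c₁*(s-aL) := by simp [hg]
      rw [hgx]
      have hL : HasDerivWithinAt U (c₁*(s-aL)) (Set.Iic 0) 0 := by
        have h1 : HasDerivWithinAt (fun y : ℝ => 1/ω + c₁ * Real.exp (y*(s-aL)))
            (c₁*(s-aL)*Real.exp ((0:ℝ)*(s-aL))) (Set.Iic 0) 0 := (hdL 0).hasDerivWithinAt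
        have h0 : c₁*(s-aL)*Real.exp ((0:ℝ)*(s-aL)) = c₁*(s-aL) := by simp
        rw [h0] at h1
        exact h1.congr (fun y hy => hUle y hy) (hUle 0 le_rfl)
      have hR : HasDerivWithinAt U (c₁*(s-aL)) (Set.Ici 0) 0 := by
        have h1 : HasDerivWithinAt (fun y : ℝ => 1/(ω+lam) + c₄ * Real.exp (-y*(t-aR)))
            (-(c₄*(t-aR))*Real.exp (-(0:ℝ)*(t-aR))) (Set.Ici 0) 0 := (hdR 0).hasDerivWithinAt
        have h0 : -(c₄*(t-aR))*Real.exp (-(0:ℝ)*(t-aR)) = c₁*(s-aL) := by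
          simp only [neg_zero, zero_mul, Real.exp_zero, mul_one]
          linear_combination -hder
        rw [h0] at h1
        refine h1.congr (fun y hy => ?_) hU0R
        rcases eq_or_lt_of_le (Set.mem_Ici.mp hy : (0:ℝ) ≤ y) with h | h
        · rw [← h]; exact hU0R
        · exact hUgt y h
      have h2 := hL.union hR
      rw [Set.Iic_union_Ici] at h2
      exact hasDerivWithinAt_univ.mp h2
    · have hgx : g x = -(c₄*(t-aR))*Real.exp (-x*(t-aR)) := by simp [hg, not_le.mpr hx]
      rw [hgx]
      refine (hdR x).congr_of_eventuallyEq ?_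
      filter_upwards [Ioi_mem_nhds hx] with y hy using hUgt y hy
  have hUdiff : Differentiable ℝ U := fun x => (hUd x).differentiableAt
  have hderivU : deriv U = g := funext fun x => (hUd x).deriv
  have hgcont : Continuous g := by
    rw [hg]
    apply Continuous.if_le
    · fun_prop
    · fun_prop
    · exact continuous_id
    · exact continuous_const
    · intro y hy; subst hy
      simp only [zero_mul, neg_zero, Real.exp_zero, mul_one]
      linear_combination hder
  have hC1 : ContDiff ℝ 1 U := contDiff_one_iff_deriv.mpr ⟨hUdiff, hderivU ▸ hgcont⟩
  refine ⟨⟨|1/ω| + |c₁| + (|1/(ω+lam)| + |c₄|), ?_⟩, hC1, ?_, ?_⟩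
  · intro x
    rcases le_or_gt x 0 with hx | hx
    · rw [hUle x hx]
      have hE1 : Real.exp (x*(s-aL)) ≤ 1 := by
        rw [Real.exp_le_one_iff]; nlinarith
      have hE0 : 0 < Real.exp (x*(s-aL)) := Real.exp_pos _
      have hA := abs_add_le (1/ω) (c₁ * Real.exp (x*(s-aL)))
      have hM : |c₁ * Real.exp (x*(s-aL))| = |c₁| * Real.exp (x*(s-aL)) := by
        rw [abs_mul, abs_of_pos hE0]
      nlinarith [abs_nonneg c₁, abs_nonneg (1/(ω+lam)), abs_nonneg c₄]
    · rw [hUgt x hx]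
      have hE1 : Real.exp (-x*(t-aR)) ≤ 1 := by
        rw [Real.exp_le_one_iff]; nlinarith
      have hE0 : 0 < Real.exp (-x*(t-aR)) := Real.exp_pos _
      have hA := abs_add_le (1/(ω+lam)) (c₄ * Real.exp (-x*(t-aR)))
      have hM : |c₄ * Real.exp (-x*(t-aR))| = |c₄| * Real.exp (-x*(t-aR)) := by
        rw [abs_mul, abs_of_pos hE0]
      nlinarith [abs_nonneg c₄, abs_nonneg (1/ω), abs_nonneg c₁]
  · intro x hx
    have h1 : deriv U x = c₁*(s-aL)*Real.exp (x*(s-aL)) := by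
      rw [hderivU]; simp [hg, hx.le]
    have hgF : HasDerivAt g (c₁*(s-aL)*(s-aL)*Real.exp (x*(s-aL))) x := by
      have h := keyHD 0 (c₁*(s-aL)) (s-aL) x
      simp only [zero_add] at h
      refine h.congr_of_eventuallyEq ?_
      filter_upwards [Iio_mem_nhds hx] with y hy
      have hy' : y < 0 := hy
      simp [hg, hy'.le]
    have h2 : deriv (deriv U) x = c₁*(s-aL)*(s-aL)*Real.exp (x*(s-aL)) := by
      rw [hderivU]; exact hgF.deriv
    rw [h1, h2, hUle x hx.le]
    have hq : (s-aL)^2 + 2*aL*(s-aL) - 2*ω = 0 := by linear_combination hs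
    have h1ω : ω * (1/ω) = 1 := by field_simp
    linear_combination (c₁ * Real.exp (x*(s-aL)) / 2) * hq - h1ω
  · intro x hx
    have h1 : deriv U x = -(c₄*(t-aR))*Real.exp (-x*(t-aR)) := by
      rw [hderivU]; simp [hg, not_le.mpr hx]
    have hgF : HasDerivAt g (c₄*(t-aR)*(t-aR)*Real.exp (-x*(t-aR))) x := by
      have h := keyHD' 0 (-(c₄*(t-aR))) (t-aR) x
      simp only [zero_add] at h
      have h' := h.congr_of_eventuallyEq (f₁ := g) ?_
      · have he : c₄*(t-aR)*(t-aR)*Real.exp (-x*(t-aR))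
            = -(-(c₄*(t-aR))*(t-aR))*Real.exp (-x*(t-aR)) := by ring
        rw [he]; exact h'
      · filter_upwards [Ioi_mem_nhds hx] with y hy
        simp [hg, not_le.mpr (Set.mem_Ioi.mp hy)]
    have h2 : deriv (deriv U) x = c₄*(t-aR)*(t-aR)*Real.exp (-x*(t-aR)) := by
      rw [hderivU]; exact hgF.deriv
    rw [h1, h2, hUgt x hx]
    have hq : (t-aR)^2 + 2*aR*(t-aR) - 2*(ω+lam) = 0 := by linear_combination ht
    have h1ωl : (ω+lam) * (1/(ω+lam)) = 1 := by field_simp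
    linear_combination (c₄ * Real.exp (-x*(t-aR)) / 2) * hq - h1ωl
end

section
/- With c₁, c₄ as in the bounded matched solution, the value at the origin satisfies U(0,ω,λ) = [ω(√(2(ω+λ)+a_R²) − a_R) + (ω+λ)(√(2ω+a_L²) − a_L)] / [ω(ω+λ)(√(2(ω+λ)+a_R²) − a_R + √(2ω+a_L²) − a_L)]. -/
open Real

lemma sqrt_sub_pos (a t : ℝ) (ht : 0 < t) : 0 < Real.sqrt (t + a^2) - a := by
  have h1 : a ≤ Real.sqrt (a^2) := by
    rw [Real.sqrt_sq_eq_abs]; exact le_abs_self a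
  have h2 : Real.sqrt (a^2) < Real.sqrt (t + a^2) :=
    Real.sqrt_lt_sqrt (sq_nonneg a) (by linarith)
  linarith

/-- value at the origin of the bounded matched solution. -/
theorem stmt1 (aL aR ω lam : ℝ) (hω : 0 < ω) (hlam : 0 < lam)
    (c₁ c₄ : ℝ)
    (hc₁ : c₁ = -(1/ω - 1/(ω + lam)) *
      (Real.sqrt (2*(ω+lam) + aR^2) - aR) /
      (Real.sqrt (2*(ω+lam) + aR^2) - aR + Real.sqrt (2*ω + aL^2) - aL))
    (hc₄ : c₄ = (1/ω - 1/(ω + lam)) *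
      (Real.sqrt (2*ω + aL^2) - aL) /
      (Real.sqrt (2*(ω+lam) + aR^2) - aR + Real.sqrt (2*ω + aL^2) - aL)) :
    1/ω + c₁ =
      (ω * (Real.sqrt (2*(ω+lam) + aR^2) - aR) +
        (ω+lam) * (Real.sqrt (2*ω + aL^2) - aL)) /
      (ω * (ω+lam) * (Real.sqrt (2*(ω+lam) + aR^2) - aR +
        Real.sqrt (2*ω + aL^2) - aL)) ∧
    1/(ω+lam) + c₄ =
      (ω * (Real.sqrt (2*(ω+lam) + aR^2) - aR) +
        (ω+lam) * (Real.sqrt (2*ω + aL^2) - aL)) /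
      (ω * (ω+lam) * (Real.sqrt (2*(ω+lam) + aR^2) - aR +
        Real.sqrt (2*ω + aL^2) - aL)) := by
  have hR := sqrt_sub_pos aR (2*(ω+lam)) (by linarith)
  have hL := sqrt_sub_pos aL (2*ω) (by linarith)
  have hden : Real.sqrt (2*(ω+lam) + aR^2) - aR + Real.sqrt (2*ω + aL^2) - aL ≠ 0 := by
    linarith
  have hω' : ω ≠ 0 := ne_of_gt hω
  have hωl : ω + lam ≠ 0 := by positivity
  subst hc₁ hc₄
  generalize hD : Real.sqrt (2*(ω+lam) + aR^2) - aR + Real.sqrt (2*ω + aL^2) - aL = D at hden ⊢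
  constructor <;> (field_simp; subst hD; ring)
end

section
/- For a_R ∈ ℝ and τ > 0, the function h₁(τ; a_R) = e^{−a_R²τ/2}/√(πτ) − (a_R/√2)·erfc(a_R√τ/√2) satisfies ∫₀^∞ e^{−μτ} h₁(τ;a_R) dτ = (√(2μ+a_R²) − a_R)/(√2·μ) for every μ > 0. -/
open Real MeasureTheory

/-- The complementary error function. -/
noncomputable def erfc (x : ℝ) : ℝ :=
  (2 / Real.sqrt π) * ∫ u in Set.Ioi x, Real.exp (-u^2)

open Set Filter Topology

lemma gauss_integrable : Integrable (fun u : ℝ => Real.exp (-u^2)) := by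
  have := integrable_exp_neg_mul_sq (one_pos)
  simpa using this

lemma gauss_Ioi_eq (x : ℝ) :
    (∫ u in Set.Ioi x, Real.exp (-u^2))
      = (∫ u in Set.Ioi (0:ℝ), Real.exp (-u^2)) - ∫ u in (0:ℝ)..x, Real.exp (-u^2) := by
  have h0 := intervalIntegral.integral_Iic_add_Ioi (b := (0:ℝ))
    (gauss_integrable.integrableOn) (gauss_integrable.integrableOn)
  have hx := intervalIntegral.integral_Iic_add_Ioi (b := x)
    (gauss_integrable.integrableOn) (gauss_integrable.integrableOn)
  have hsub := intervalIntegral.integral_Iic_sub_Iic (a := (0:ℝ)) (b := x) (μ := volume)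
    (f := fun u : ℝ => Real.exp (-u^2)) gauss_integrable.integrableOn gauss_integrable.integrableOn
  have := hx.trans h0.symm
  linarith [hsub, this]

lemma erfc_hasDerivAt (x : ℝ) :
    HasDerivAt erfc (-(2 / Real.sqrt π) * Real.exp (-x^2)) x := by
  have h1 : ∀ y, erfc y = (2 / Real.sqrt π) *
      ((∫ u in Set.Ioi (0:ℝ), Real.exp (-u^2)) - ∫ u in (0:ℝ)..y, Real.exp (-u^2)) := by
    intro y; rw [erfc, gauss_Ioi_eq]
  have hd : HasDerivAt (fun y => ∫ u in (0:ℝ)..y, Real.exp (-u^2)) (Real.exp (-x^2)) x := by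
    have hcont : Continuous (fun u : ℝ => Real.exp (-u^2)) := by fun_prop
    refine intervalIntegral.integral_hasDerivAt_right
      (gauss_integrable.intervalIntegrable (a := 0) (b := x)) ?_ hcont.continuousAt
    exact hcont.stronglyMeasurable.stronglyMeasurableAtFilter
  have : HasDerivAt (fun y => (2 / Real.sqrt π) *
      ((∫ u in Set.Ioi (0:ℝ), Real.exp (-u^2)) - ∫ u in (0:ℝ)..y, Real.exp (-u^2)))
      ((2 / Real.sqrt π) * (0 - Real.exp (-x^2))) x :=
    ((hasDerivAt_const x _).sub hd).const_mul _
  refine HasDerivAt.congr_of_eventuallyEq ?_ (Filter.Eventually.of_forall h1)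
  refine this.congr_deriv ?_; ring

lemma erfc_zero : erfc 0 = 1 := by
  have h : ∫ u in Set.Ioi (0:ℝ), Real.exp (-u^2) = Real.sqrt π / 2 := by
    have := integral_gaussian_Ioi 1
    simpa using this
  rw [erfc, h]
  rw [div_mul_div_comm]
  rw [div_eq_one_iff_eq (by positivity)]
  ring

lemma erfc_nonneg (x : ℝ) : 0 ≤ erfc x := by
  rw [erfc]
  have : 0 ≤ ∫ u in Set.Ioi x, Real.exp (-u^2) :=
    setIntegral_nonneg measurableSet_Ioi (fun u _ => (Real.exp_pos _).le)
  positivity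

lemma erfc_le_two (x : ℝ) : erfc x ≤ 2 := by
  rw [erfc]
  have h1 : (∫ u in Set.Ioi x, Real.exp (-u^2)) ≤ ∫ u : ℝ, Real.exp (-u^2) :=
    setIntegral_le_integral gauss_integrable
      (Filter.Eventually.of_forall fun u => (Real.exp_pos _).le)
  have h2 : (∫ u : ℝ, Real.exp (-u^2)) = Real.sqrt π := by
    have := integral_gaussian 1; simpa using this
  calc (2 / Real.sqrt π) * ∫ u in Set.Ioi x, Real.exp (-u^2)
      ≤ (2 / Real.sqrt π) * Real.sqrt π := by
        apply mul_le_mul_of_nonneg_left (h1.trans_eq h2) (by positivity)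
    _ = 2 := by field_simp

lemma erfc_continuous : Continuous erfc :=
  continuous_iff_continuousAt.mpr fun x => (erfc_hasDerivAt x).continuousAt

lemma gaussA_integrable {c : ℝ} (hc : 0 < c) :
    IntegrableOn (fun τ : ℝ => Real.exp (-c * τ) / Real.sqrt (π * τ)) (Set.Ioi 0) := by
  have h := integrableOn_rpow_mul_exp_neg_mul_rpow (s := -(1/2)) (p := 1) (b := c)
    (by norm_num) one_pos hc
  have h2 : IntegrableOn (fun x : ℝ => (Real.sqrt π)⁻¹ * (x ^ (-(1/2):ℝ) * Real.exp (-c * x ^ (1:ℝ)))) (Set.Ioi 0) :=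
    h.const_mul _
  refine h2.congr_fun (fun x hx => ?_) measurableSet_Ioi
  have hx0 : (0:ℝ) < x := hx
  beta_reduce
  rw [Real.rpow_one, Real.rpow_neg hx0.le, ← Real.sqrt_eq_rpow, Real.sqrt_mul pi_pos.le]
  field_simp

lemma gaussA {c : ℝ} (hc : 0 < c) :
    ∫ τ in Set.Ioi (0:ℝ), Real.exp (-c * τ) / Real.sqrt (π * τ) = 1 / Real.sqrt c := by
  have h := integral_rpow_mul_exp_neg_mul_Ioi (a := 1/2) (r := c) (by norm_num) hc
  rw [Real.Gamma_one_half_eq] at h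
  have heq : ∫ τ in Set.Ioi (0:ℝ), Real.exp (-c * τ) / Real.sqrt (π * τ)
      = ∫ t in Set.Ioi (0:ℝ), (Real.sqrt π)⁻¹ * (t ^ ((1:ℝ)/2 - 1) * Real.exp (-(c * t))) := by
    refine setIntegral_congr_fun measurableSet_Ioi (fun x hx => ?_)
    have hx0 : (0:ℝ) < x := hx
    have : ((1:ℝ)/2 - 1) = -(1/2) := by norm_num
    rw [this, Real.rpow_neg hx0.le, ← Real.sqrt_eq_rpow, Real.sqrt_mul pi_pos.le, neg_mul]
    field_simp
  rw [heq, integral_const_mul, h, ← Real.sqrt_eq_rpow, one_div c, Real.sqrt_inv]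
  rw [mul_comm ((√c)⁻¹), ← mul_assoc, inv_mul_cancel₀ (by positivity : Real.sqrt π ≠ 0)]
  rw [one_mul, one_div]

/-- the Laplace transform of `h₁` is `H₁`. -/
theorem stmt5 (aR : ℝ) (μ : ℝ) (hμ : 0 < μ) :
    ∫ τ in Set.Ioi (0:ℝ),
        Real.exp (-μ * τ) *
          (Real.exp (-aR^2 * τ / 2) / Real.sqrt (π * τ) -
            (aR / Real.sqrt 2) * erfc (aR * Real.sqrt τ / Real.sqrt 2))
      = (Real.sqrt (2*μ + aR^2) - aR) / (Real.sqrt 2 * μ) := by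
  have h2 : (0:ℝ) < Real.sqrt 2 := by positivity
  set c : ℝ := μ + aR^2/2 with hc_def
  have hc : 0 < c := by positivity
  set E : ℝ → ℝ := fun τ => erfc (aR * Real.sqrt τ / Real.sqrt 2) with hE
  set D : ℝ → ℝ := fun τ => Real.exp (-aR^2 * τ / 2) / Real.sqrt (π * τ) with hD
  have hEcont : Continuous E :=
    erfc_continuous.comp ((continuous_const.mul Real.continuous_sqrt).div_const _)
  have hGeq : ∀ τ ∈ Set.Ioi (0:ℝ),
      Real.exp (-μ * τ) * D τ = Real.exp (-c * τ) / Real.sqrt (π * τ) := by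
    intro τ _
    simp only [hD]
    rw [← mul_div_assoc, ← Real.exp_add, hc_def]
    congr 2
    ring
  -- derivative of E
  have hE_deriv : ∀ τ ∈ Set.Ioi (0:ℝ), HasDerivAt E (-(aR / Real.sqrt 2) * D τ) τ := by
    intro τ hτ
    have hτ0 : (0:ℝ) < τ := hτ
    have hs : HasDerivAt (fun t : ℝ => aR * Real.sqrt t / Real.sqrt 2)
        (aR * (1 / (2 * Real.sqrt τ)) / Real.sqrt 2) τ :=
      ((Real.hasDerivAt_sqrt hτ0.ne').const_mul aR).div_const _
    have h := (erfc_hasDerivAt (aR * Real.sqrt τ / Real.sqrt 2)).comp τ hs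
    refine h.congr_deriv ?_
    have hx2 : (aR * Real.sqrt τ / Real.sqrt 2)^2 = aR^2 * τ / 2 := by
      rw [div_pow, mul_pow, Real.sq_sqrt hτ0.le, Real.sq_sqrt (by norm_num : (0:ℝ) ≤ 2)]
    rw [hx2]
    simp only [hD]
    have hsτ : (0:ℝ) < Real.sqrt τ := Real.sqrt_pos.mpr hτ0
    have hsπ : (0:ℝ) < Real.sqrt π := Real.sqrt_pos.mpr pi_pos
    have harg : -aR^2 * τ / 2 = -(aR^2 * τ / 2) := by ring
    rw [harg, Real.sqrt_mul pi_pos.le]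
    field_simp
  -- integrability of exp(-μτ)*E
  have hBint : IntegrableOn (fun τ => Real.exp (-μ * τ) * E τ) (Set.Ioi 0) := by
    have hgint : IntegrableOn (fun τ : ℝ => 2 * Real.exp (-μ * τ)) (Set.Ioi 0) := by
      have := (exp_neg_integrableOn_Ioi 0 hμ).const_mul 2
      simp only [neg_mul] at this ⊢; exact this
    refine Integrable.mono' hgint ?_ ?_
    · exact (((Real.continuous_exp.comp (continuous_const.mul continuous_id : Continuous fun t : ℝ => -μ * t))).mul hEcont).aestronglyMeasurable
    · filter_upwards [ae_restrict_mem measurableSet_Ioi] with τ _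
      rw [Real.norm_eq_abs, abs_mul, abs_of_pos (Real.exp_pos _),
        abs_of_nonneg (erfc_nonneg _)]
      have := erfc_le_two (aR * Real.sqrt τ / Real.sqrt 2)
      nlinarith [Real.exp_pos (-μ * τ)]
  set B : ℝ := ∫ τ in Set.Ioi (0:ℝ), Real.exp (-μ * τ) * E τ with hBdef
  -- integration by parts
  have hU : ∀ τ ∈ Set.Ioi (0:ℝ),
      HasDerivAt (fun t => Real.exp (-μ * t)) (-μ * Real.exp (-μ * τ)) τ := by
    intro τ _
    have := ((hasDerivAt_id τ).const_mul (-μ)).exp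
    simpa [mul_comm] using this
  have huv' : IntegrableOn ((fun t => Real.exp (-μ * t)) *
      (fun τ => -(aR / Real.sqrt 2) * D τ)) (Set.Ioi 0) := by
    have hbase : IntegrableOn
        (fun τ : ℝ => -(aR / Real.sqrt 2) * (Real.exp (-c * τ) / Real.sqrt (π * τ)))
        (Set.Ioi 0) := (gaussA_integrable hc).const_mul _
    refine hbase.congr_fun (fun τ hτ => ?_) measurableSet_Ioi
    simp only [Pi.mul_apply]
    rw [← hGeq τ hτ]; ring
  have hu'v : IntegrableOn ((fun τ => -μ * Real.exp (-μ * τ)) * E) (Set.Ioi 0) := by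
    have hbase : IntegrableOn (fun τ : ℝ => -μ * (Real.exp (-μ * τ) * E τ)) (Set.Ioi 0) :=
      hBint.const_mul _
    refine hbase.congr_fun (fun τ _ => ?_) measurableSet_Ioi
    simp only [Pi.mul_apply]; ring
  have h_zero : Tendsto ((fun t => Real.exp (-μ * t)) * E) (nhdsWithin 0 (Set.Ioi 0)) (nhds 1) := by
    have hcont : Continuous ((fun t => Real.exp (-μ * t)) * E) :=
      (Real.continuous_exp.comp (continuous_const.mul continuous_id : Continuous fun t : ℝ => -μ * t)).mul hEcont
    have hval : ((fun t => Real.exp (-μ * t)) * E) 0 = 1 := by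
      simp [hE, erfc_zero]
    have h0 : Tendsto ((fun t => Real.exp (-μ * t)) * E) (nhdsWithin 0 (Set.Ioi 0))
        (nhds (((fun t => Real.exp (-μ * t)) * E) 0)) :=
      (hcont.tendsto 0).mono_left nhdsWithin_le_nhds
    rwa [hval] at h0
  have h_infty : Tendsto ((fun t => Real.exp (-μ * t)) * E) atTop (nhds 0) := by
    have hbound : ∀ τ : ℝ, ‖((fun t => Real.exp (-μ * t)) * E) τ‖ ≤ 2 * Real.exp (-(μ * τ)) := by
      intro τ
      simp only [Pi.mul_apply, Real.norm_eq_abs, abs_mul, abs_of_pos (Real.exp_pos _),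
        hE, abs_of_nonneg (erfc_nonneg _), neg_mul]
      have := erfc_le_two (aR * Real.sqrt τ / Real.sqrt 2)
      nlinarith [Real.exp_pos (-(μ * τ))]
    have htend : Tendsto (fun τ : ℝ => 2 * Real.exp (-(μ * τ))) atTop (nhds 0) := by
      have h1 : Tendsto (fun τ : ℝ => μ * τ) atTop atTop :=
        tendsto_id.const_mul_atTop hμ
      have := (Real.tendsto_exp_neg_atTop_nhds_zero.comp h1).const_mul 2
      simpa using this
    exact squeeze_zero_norm hbound htend
  have hIBP := integral_Ioi_mul_deriv_eq_deriv_mul hU hE_deriv huv' hu'v h_zero h_infty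
  -- evaluate LHS of IBP
  have hL : ∫ τ in Set.Ioi (0:ℝ), Real.exp (-μ * τ) * (-(aR / Real.sqrt 2) * D τ)
      = -(aR / Real.sqrt 2) * (1 / Real.sqrt c) := by
    rw [← gaussA hc, ← integral_const_mul]
    refine setIntegral_congr_fun measurableSet_Ioi (fun τ hτ => ?_)
    rw [← hGeq τ hτ]; ring
  have hR : ∫ τ in Set.Ioi (0:ℝ), (-μ * Real.exp (-μ * τ)) * E τ = -μ * B := by
    rw [hBdef, ← integral_const_mul]
    refine setIntegral_congr_fun measurableSet_Ioi (fun τ _ => ?_)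
    ring
  rw [hL] at hIBP
  have hRB : ∫ (x : ℝ) in Set.Ioi 0, (fun τ => -μ * Real.exp (-μ * τ)) x * E x = -μ * B := hR
  rw [hRB] at hIBP
  have hB : μ * B = 1 - (aR / Real.sqrt 2) * (1 / Real.sqrt c) := by linarith
  -- split the main integral
  have hsplit : ∫ τ in Set.Ioi (0:ℝ),
      Real.exp (-μ * τ) * (D τ - (aR / Real.sqrt 2) * E τ)
      = (∫ τ in Set.Ioi (0:ℝ), Real.exp (-c * τ) / Real.sqrt (π * τ))
        - (aR / Real.sqrt 2) * B := by
    have hGint : IntegrableOn (fun τ => Real.exp (-μ * τ) * D τ) (Set.Ioi 0) :=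
      (gaussA_integrable hc).congr_fun (fun τ hτ => (hGeq τ hτ).symm) measurableSet_Ioi
    have hEint : IntegrableOn (fun τ => (aR / Real.sqrt 2) * (Real.exp (-μ * τ) * E τ)) (Set.Ioi 0) :=
      hBint.const_mul _
    have : ∫ τ in Set.Ioi (0:ℝ), (Real.exp (-μ * τ) * D τ
        - (aR / Real.sqrt 2) * (Real.exp (-μ * τ) * E τ))
        = (∫ τ in Set.Ioi (0:ℝ), Real.exp (-μ * τ) * D τ)
          - ∫ τ in Set.Ioi (0:ℝ), (aR / Real.sqrt 2) * (Real.exp (-μ * τ) * E τ) :=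
      integral_sub hGint hEint
    rw [integral_const_mul] at this
    rw [← hBdef] at this
    have heqG : ∫ τ in Set.Ioi (0:ℝ), Real.exp (-μ * τ) * D τ
        = ∫ τ in Set.Ioi (0:ℝ), Real.exp (-c * τ) / Real.sqrt (π * τ) :=
      setIntegral_congr_fun measurableSet_Ioi hGeq
    rw [heqG] at this
    rw [← this]
    refine setIntegral_congr_fun measurableSet_Ioi (fun τ _ => ?_)
    ring
  rw [hsplit, gaussA hc]
  -- final algebra
  have h2c : 2*μ + aR^2 = 2*c := by rw [hc_def]; ring
  rw [h2c, Real.sqrt_mul (by norm_num : (0:ℝ) ≤ 2)]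
  have hsc : (0:ℝ) < Real.sqrt c := Real.sqrt_pos.mpr hc
  have hscc : Real.sqrt c * Real.sqrt c = c := Real.mul_self_sqrt hc.le
  have h22 : Real.sqrt 2 * Real.sqrt 2 = 2 := Real.mul_self_sqrt (by norm_num)
  have hBv : B = (1 - (aR / Real.sqrt 2) * (1 / Real.sqrt c)) / μ := by
    field_simp at hB ⊢; linarith
  rw [hBv]
  field_simp
  linear_combination (μ - c) * h22 - Real.sqrt 2 ^ 2 * hscc - 2 * hc_def
end

section
/- For every k ∈ ℝ and t > 0, the inverse Laplace transform identity ∫₀^∞ e^{−st}·[1/(2π t^{3/2}) ∫₀^∞ z·e^{−(z²/4)(1+1/t)}·e^{−kz} dz] dt evaluated via Laplace transform yields: the Laplace transform of t ↦ (1/(2π t^{3/2})) ∫₀^∞ z e^{−(z²/4)(1+1/t)} e^{−kz} dz at frequency s > 0 equals e^{(√s+k)²} erfc(√s + k). -/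
open Real MeasureTheory

open Set Filter


lemma integrableOn_id_mul_exp_neg_mul_sq {b : ℝ} (hb : 0 < b) :
    IntegrableOn (fun z : ℝ => z * Real.exp (-b * z ^ 2)) (Ioi 0) := by
  refine (integrableOn_rpow_mul_exp_neg_mul_sq hb (s := 1) (by norm_num)).congr_fun
    (fun x hx => by simp only [Real.rpow_one]) measurableSet_Ioi

lemma integral_id_mul_exp_neg_mul_sq {b : ℝ} (hb : 0 < b) :
    ∫ z in Ioi (0:ℝ), z * Real.exp (-b * z ^ 2) = 1 / (2 * b) := by
  have hderiv : ∀ x ∈ Ioi (0:ℝ),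
      HasDerivAt (fun z : ℝ => -Real.exp (-b * z ^ 2) / (2 * b))
        (x * Real.exp (-b * x ^ 2)) x := by
    intro x _
    have h1 : HasDerivAt (fun z : ℝ => -b * z ^ 2) (-b * (2 * x)) x := by
      simpa using (hasDerivAt_pow 2 x).const_mul (-b)
    have h3 := (h1.exp.neg).div_const (2 * b)
    refine h3.congr_deriv ?_
    rw [div_eq_iff (by positivity)]
    ring
  have hcont : ContinuousWithinAt (fun z : ℝ => -Real.exp (-b * z ^ 2) / (2 * b)) (Ici 0) 0 :=
    ((Real.continuous_exp.comp (by continuity)).neg.div_const _).continuousWithinAt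
  have htend : Tendsto (fun z : ℝ => -Real.exp (-b * z ^ 2) / (2 * b)) atTop (nhds 0) := by
    have h1 : Tendsto (fun z : ℝ => -b * z ^ 2) atTop atBot := by
      have h0 := (tendsto_pow_atTop (n := 2) (by norm_num)).const_mul_atTop hb
      have := tendsto_neg_atTop_atBot.comp h0
      simpa [Function.comp_def, neg_mul] using this
    have h2 := (Real.tendsto_exp_atBot.comp h1).neg.div_const (2 * b)
    simpa using h2
  have := integral_Ioi_of_hasDerivAt_of_tendsto hcont hderiv
    (integrableOn_id_mul_exp_neg_mul_sq hb) htend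
  rw [this]
  norm_num
  field_simp

lemma integrableOn_kernel {b k : ℝ} (hb : 0 < b) :
    IntegrableOn (fun z : ℝ => z * Real.exp (-b * z ^ 2) * Real.exp (-k * z)) (Ioi 0) := by
  have hmeas : AEStronglyMeasurable (fun z : ℝ => z * Real.exp (-b * z ^ 2) * Real.exp (-k * z))
      (volume.restrict (Ioi 0)) :=
    (((measurable_id.mul (((measurable_id.pow_const 2).const_mul (-b)).exp)).mul
      ((measurable_id.const_mul (-k)).exp)).aestronglyMeasurable)
  refine Integrable.mono' (((integrableOn_id_mul_exp_neg_mul_sq (b := b/2) (by linarith)).const_mul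
    (Real.exp (k ^ 2 / (2 * b))))) hmeas ?_
  filter_upwards [ae_restrict_mem measurableSet_Ioi] with z hz
  have hz0 : (0:ℝ) < z := hz
  rw [Real.norm_eq_abs, abs_mul, abs_mul, abs_of_pos hz0, abs_of_pos (Real.exp_pos _),
    abs_of_pos (Real.exp_pos _)]
  rw [mul_assoc, ← Real.exp_add]
  have hexp : Real.exp (-b * z ^ 2 + -k * z) ≤ Real.exp (-(b/2) * z ^ 2 + k ^ 2 / (2 * b)) := by
    apply Real.exp_le_exp.2
    rw [← sub_nonneg]
    have heq : (-(b/2) * z ^ 2 + k ^ 2 / (2 * b)) - (-b * z ^ 2 + -k * z)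
        = (b * z + k) ^ 2 / (2 * b) := by field_simp; ring
    rw [heq]; positivity
  calc z * Real.exp (-b * z ^ 2 + -k * z) ≤ z * Real.exp (-(b/2) * z ^ 2 + k ^ 2 / (2 * b)) :=
        mul_le_mul_of_nonneg_left hexp hz0.le
    _ = Real.exp (k ^ 2 / (2 * b)) * (z * Real.exp (-(b/2) * z ^ 2)) := by
        rw [Real.exp_add]; ring


-- reflection substitution u ↦ c/u on Ioi 0
lemma reflect_image {c : ℝ} (hc : 0 < c) : (fun u : ℝ => c / u) '' Ioi 0 = Ioi 0 := by
  ext x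
  constructor
  · rintro ⟨u, hu, rfl⟩
    exact div_pos hc hu
  · intro hx
    exact ⟨c / x, div_pos hc hx, by field_simp⟩

lemma reflect_integral {c : ℝ} (hc : 0 < c) (g : ℝ → ℝ) :
    ∫ u in Ioi (0:ℝ), g u = ∫ u in Ioi (0:ℝ), (c / u ^ 2) * g (c / u) := by
  have hderiv : ∀ u ∈ Ioi (0:ℝ), HasDerivWithinAt (fun u : ℝ => c / u) (-(c / u ^ 2)) (Ioi 0) u := by
    intro u hu
    have h := (hasDerivAt_inv (ne_of_gt hu)).const_mul c
    have : c * -(u ^ 2)⁻¹ = -(c / u ^ 2) := by field_simp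
    simpa [div_eq_mul_inv, this] using h.hasDerivWithinAt
  have hinj : InjOn (fun u : ℝ => c / u) (Ioi 0) := by
    intro u hu v hv h
    simp only at h
    rw [div_eq_div_iff (ne_of_gt hu) (ne_of_gt hv)] at h
    exact mul_left_cancel₀ (ne_of_gt hc) h.symm
  have := integral_image_eq_integral_abs_deriv_smul measurableSet_Ioi hderiv hinj g
  rw [reflect_image hc] at this
  rw [this]
  refine setIntegral_congr_fun measurableSet_Ioi (fun u hu => ?_)
  have hu0 : (0:ℝ) < u := hu
  rw [smul_eq_mul, abs_neg, abs_of_pos (by positivity : (0:ℝ) < c / u ^ 2)]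

lemma glasser_sub_image {c : ℝ} (hc : 0 < c) : (fun u : ℝ => u - c / u) '' Ioi 0 = univ := by
  ext w
  simp only [mem_univ, iff_true, mem_image]
  refine ⟨(w + Real.sqrt (w ^ 2 + 4 * c)) / 2, ?_, ?_⟩
  · have h1 : |w| < Real.sqrt (w ^ 2 + 4 * c) := by
      rw [show |w| = Real.sqrt (w ^ 2) by rw [Real.sqrt_sq_eq_abs]]
      exact Real.sqrt_lt_sqrt (sq_nonneg w) (by linarith)
    have := neg_abs_le w
    simp only [mem_Ioi]
    nlinarith [h1, abs_nonneg w]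
  · have h1 : |w| < Real.sqrt (w ^ 2 + 4 * c) := by
      rw [show |w| = Real.sqrt (w ^ 2) by rw [Real.sqrt_sq_eq_abs]]
      exact Real.sqrt_lt_sqrt (sq_nonneg w) (by linarith)
    have hu : (0:ℝ) < w + Real.sqrt (w ^ 2 + 4 * c) := by
      have := neg_abs_le w
      nlinarith [h1, abs_nonneg w]
    have hsq : Real.sqrt (w ^ 2 + 4 * c) ^ 2 = w ^ 2 + 4 * c :=
      Real.sq_sqrt (by positivity)
    show (w + Real.sqrt (w ^ 2 + 4 * c)) / 2 - c / ((w + Real.sqrt (w ^ 2 + 4 * c)) / 2) = w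
    field_simp
    nlinarith [hsq]

lemma glasser {c : ℝ} (hc : 0 < c) :
    ∫ u in Ioi (0:ℝ), Real.exp (-(u - c / u) ^ 2) = Real.sqrt π / 2 := by
  set g : ℝ → ℝ := fun u => Real.exp (-(u - c / u) ^ 2) with hg
  -- integrability of g on Ioi 0
  have hgmeas0 : Measurable g :=
    (((measurable_id.sub (measurable_const.div measurable_id)).pow_const 2).neg).exp
  have hgmeas : AEStronglyMeasurable g (volume.restrict (Ioi 0)) :=
    hgmeas0.aestronglyMeasurable
  have hgint : IntegrableOn g (Ioi 0) := by
    refine Integrable.mono'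
      (((integrable_exp_neg_mul_sq one_pos).integrableOn).const_mul (Real.exp (2 * c)))
      hgmeas ?_
    filter_upwards [ae_restrict_mem measurableSet_Ioi] with u hu
    have hu0 : (0:ℝ) < u := hu
    rw [Real.norm_eq_abs, abs_of_pos (Real.exp_pos _), ← Real.exp_add]
    apply Real.exp_le_exp.2
    have h : (u - c / u) ^ 2 = u ^ 2 - 2 * c + (c / u) ^ 2 := by field_simp; ring
    nlinarith [sq_nonneg (c / u)]
  have hderiv : ∀ u ∈ Ioi (0:ℝ),
      HasDerivWithinAt (fun u : ℝ => u - c / u) (1 + c / u ^ 2) (Ioi 0) u := by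
    intro u hu
    have hu0 : (0:ℝ) < u := hu
    have h := (hasDerivAt_id u).sub ((hasDerivAt_inv (ne_of_gt hu0)).const_mul c)
    have e : (1:ℝ) - c * -(u ^ 2)⁻¹ = 1 + c / u ^ 2 := by field_simp; ring
    rw [e] at h
    exact (h.congr_of_eventuallyEq (by
      filter_upwards [eventually_ne_nhds (ne_of_gt hu0)] with x hx
      simp [div_eq_mul_inv])).hasDerivWithinAt
  have hinj : InjOn (fun u : ℝ => u - c / u) (Ioi 0) := by
    intro u hu v hv h
    have hu0 : u ≠ 0 := ne_of_gt hu
    have hv0 : v ≠ 0 := ne_of_gt hv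
    simp only at h
    field_simp at h
    have h' : (u - v) * (u * v + c) = 0 := by linear_combination h
    rcases mul_eq_zero.1 h' with h'' | h''
    · linarith [sub_eq_zero.1 h'']
    · nlinarith [mul_pos (show (0:ℝ) < u from hu) (show (0:ℝ) < v from hv)]
  have hsub := integral_image_eq_integral_abs_deriv_smul measurableSet_Ioi hderiv hinj
    (fun x => Real.exp (-x ^ 2))
  rw [glasser_sub_image hc] at hsub
  have hgauss : Integrable (fun x : ℝ => Real.exp (-x ^ 2)) := by
    simpa using integrable_exp_neg_mul_sq one_pos
  have hint_iff := integrableOn_image_iff_integrableOn_abs_deriv_smul measurableSet_Ioi hderiv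
    hinj (fun x => Real.exp (-x ^ 2))
  rw [glasser_sub_image hc] at hint_iff
  have h1int : IntegrableOn (fun u : ℝ => (1 + c / u ^ 2) * g u) (Ioi 0) := by
    refine ((hint_iff.1 (by rwa [integrableOn_univ])).congr_fun ?_ measurableSet_Ioi)
    intro u hu
    have hu0 : (0:ℝ) < u := hu
    show |1 + c / u ^ 2| • Real.exp (-(u - c / u) ^ 2) = (1 + c / u ^ 2) * g u
    rw [smul_eq_mul, abs_of_pos (by positivity : (0:ℝ) < 1 + c / u ^ 2)]
  have h2int : IntegrableOn (fun u : ℝ => (c / u ^ 2) * g u) (Ioi 0) := by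
    refine IntegrableOn.congr_fun (h1int.sub hgint) (fun u hu => ?_) measurableSet_Ioi
    show (1 + c / u ^ 2) * g u - g u = (c / u ^ 2) * g u
    ring
  have hkey : ∫ x : ℝ, Real.exp (-x ^ 2) = Real.sqrt π := by
    have := integral_gaussian 1
    simpa using this
  have hsub' : Real.sqrt π = ∫ u in Ioi (0:ℝ), (1 + c / u ^ 2) * g u := by
    rw [← hkey, ← setIntegral_univ, hsub]
    refine setIntegral_congr_fun measurableSet_Ioi (fun u hu => ?_)
    have hu0 : (0:ℝ) < u := hu
    show |1 + c / u ^ 2| • Real.exp (-(u - c / u) ^ 2) = (1 + c / u ^ 2) * g u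
    rw [smul_eq_mul, abs_of_pos (by positivity : (0:ℝ) < 1 + c / u ^ 2)]
  have hrefl : ∫ u in Ioi (0:ℝ), (c / u ^ 2) * g u = ∫ u in Ioi (0:ℝ), g u := by
    rw [reflect_integral hc g]
    refine setIntegral_congr_fun measurableSet_Ioi (fun u hu => ?_)
    have hu0 : (0:ℝ) < u := hu
    have e : c / (c / u) = u := by field_simp
    show (c / u ^ 2) * Real.exp (-(u - c / u) ^ 2)
        = (c / u ^ 2) * Real.exp (-(c / u - c / (c / u)) ^ 2)
    rw [e]
    ring_nf
  have hadd : ∫ u in Ioi (0:ℝ), (1 + c / u ^ 2) * g u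
      = (∫ u in Ioi (0:ℝ), g u) + ∫ u in Ioi (0:ℝ), (c / u ^ 2) * g u := by
    rw [← integral_add hgint h2int]
    refine setIntegral_congr_fun measurableSet_Ioi (fun u hu => ?_)
    show (1 + c / u ^ 2) * g u = g u + (c / u ^ 2) * g u
    ring
  rw [hadd, hrefl] at hsub'
  linarith


lemma glasser' {b : ℝ} (hb : 0 < b) :
    ∫ u in Ioi (0:ℝ), Real.exp (-(u ^ 2 + b ^ 2 / u ^ 2)) = Real.sqrt π / 2 * Real.exp (-(2 * b)) := by
  have : ∀ u ∈ Ioi (0:ℝ), Real.exp (-(u ^ 2 + b ^ 2 / u ^ 2))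
      = Real.exp (-(2 * b)) * Real.exp (-(u - b / u) ^ 2) := by
    intro u hu
    have hu0 : (0:ℝ) < u := hu
    rw [← Real.exp_add]
    congr 1
    field_simp
    ring
  rw [setIntegral_congr_fun measurableSet_Ioi this, integral_const_mul, glasser hb]
  ring

lemma laplace_heat {a s : ℝ} (ha : 0 < a) (hs : 0 < s) :
    ∫ t in Ioi (0:ℝ), Real.exp (-s * t) * Real.exp (-a ^ 2 / (4 * t)) * t ^ (-(3:ℝ)/2)
      = (2 * Real.sqrt π / a) * Real.exp (-(a * Real.sqrt s)) := by
  set F : ℝ → ℝ := fun t => Real.exp (-s * t) * Real.exp (-a ^ 2 / (4 * t)) * t ^ (-(3:ℝ)/2)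
    with hF
  have himg : (fun u : ℝ => a ^ 2 / (4 * u ^ 2)) '' Ioi 0 = Ioi 0 := by
    ext t
    constructor
    · rintro ⟨u, hu, rfl⟩
      have hu0 : (0:ℝ) < u := hu
      have h4 : (0:ℝ) < 4 * u ^ 2 := by positivity
      exact mem_Ioi.2 (div_pos (by positivity) h4)
    · intro ht
      have ht0 : (0:ℝ) < t := ht
      have hst0 : (0:ℝ) < Real.sqrt t := Real.sqrt_pos.2 ht0
      refine ⟨a / (2 * Real.sqrt t), mem_Ioi.2 (by positivity), ?_⟩
      have hst : Real.sqrt t ^ 2 = t := Real.sq_sqrt ht0.le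
      field_simp
      nlinarith [hst, hst0]
  have hderiv : ∀ u ∈ Ioi (0:ℝ),
      HasDerivWithinAt (fun u : ℝ => a ^ 2 / (4 * u ^ 2)) (-(a ^ 2 / (2 * u ^ 3))) (Ioi 0) u := by
    intro u hu
    have hu0 : (0:ℝ) < u := hu
    have h1 : HasDerivAt (fun u : ℝ => u ^ 2) (2 * u) u := by simpa using hasDerivAt_pow 2 u
    have h2 := (h1.inv (by positivity)).const_mul (a ^ 2 / 4)
    have e : a ^ 2 / 4 * (-(2 * u) / (u ^ 2) ^ 2) = -(a ^ 2 / (2 * u ^ 3)) := by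
      field_simp; ring
    rw [e] at h2
    exact (h2.congr_of_eventuallyEq (by
      filter_upwards [eventually_ne_nhds (ne_of_gt hu0)] with x hx
      simp only [Pi.inv_apply]; field_simp)).hasDerivWithinAt
  have hinj : InjOn (fun u : ℝ => a ^ 2 / (4 * u ^ 2)) (Ioi 0) := by
    intro u hu v hv h
    have hu0 : (0:ℝ) < u := hu
    have hv0 : (0:ℝ) < v := hv
    simp only at h
    rw [div_eq_div_iff (by positivity) (by positivity)] at h
    have h' : v ^ 2 = u ^ 2 := by
      have ha2 : (a:ℝ) ^ 2 ≠ 0 := by positivity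
      have := mul_left_cancel₀ ha2 h
      linarith
    have := congrArg Real.sqrt h'
    rwa [Real.sqrt_sq hv0.le, Real.sqrt_sq hu0.le, eq_comm] at this
  have hsub := integral_image_eq_integral_abs_deriv_smul measurableSet_Ioi hderiv hinj F
  rw [himg] at hsub
  rw [hsub]
  have : ∀ u ∈ Ioi (0:ℝ), |(-(a ^ 2 / (2 * u ^ 3)))| • F (a ^ 2 / (4 * u ^ 2))
      = (4 / a) * Real.exp (-(u ^ 2 + (a * Real.sqrt s / 2) ^ 2 / u ^ 2)) := by
    intro u hu
    have hu0 : (0:ℝ) < u := hu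
    have habs : |(-(a ^ 2 / (2 * u ^ 3)))| = a ^ 2 / (2 * u ^ 3) := by
      rw [abs_neg, abs_of_pos (by positivity)]
    rw [smul_eq_mul, habs, hF]
    simp only
    -- rpow part
    have hw : (0:ℝ) < a / (2 * u) := by positivity
    have e1 : a ^ 2 / (4 * u ^ 2) = (a / (2 * u)) ^ 2 := by ring
    have e2 : (a ^ 2 / (4 * u ^ 2)) ^ (-(3:ℝ)/2) = (2 * u / a) ^ 3 := by
      rw [e1, ← Real.rpow_natCast (a / (2 * u)) 2, ← Real.rpow_mul hw.le]
      rw [show ((2:ℕ):ℝ) * (-(3:ℝ)/2) = ((-3:ℤ):ℝ) by norm_num]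
      rw [Real.rpow_intCast]
      rw [zpow_neg, zpow_ofNat, ← inv_pow, inv_div]
    rw [e2]
    have e3 : -a ^ 2 / (4 * (a ^ 2 / (4 * u ^ 2))) = -u ^ 2 := by
      rw [div_eq_iff (by positivity : (4:ℝ) * (a ^ 2 / (4 * u ^ 2)) ≠ 0)]
      field_simp
    rw [e3]
    have e4 : -s * (a ^ 2 / (4 * u ^ 2)) = -((a * Real.sqrt s / 2) ^ 2 / u ^ 2) := by
      have h2 : Real.sqrt s ^ 2 = s := Real.sq_sqrt hs.le
      field_simp
      linear_combination 4 * h2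
    rw [e4]
    rw [show -(u ^ 2 + (a * Real.sqrt s / 2) ^ 2 / u ^ 2)
        = -((a * Real.sqrt s / 2) ^ 2 / u ^ 2) + -u ^ 2 by ring, Real.exp_add]
    field_simp
    ring
  rw [setIntegral_congr_fun measurableSet_Ioi this, integral_const_mul,
    glasser' (by positivity : (0:ℝ) < a * Real.sqrt s / 2)]
  rw [show 2 * (a * Real.sqrt s / 2) = a * Real.sqrt s by ring]
  field_simp
  ring

lemma gauss_shift (c : ℝ) :
    ∫ z in Ioi (0:ℝ), Real.exp (-(z ^ 2 / 4) - c * z)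
      = Real.sqrt π * Real.exp (c ^ 2) * ((2 / Real.sqrt π) * ∫ u in Ioi c, Real.exp (-u ^ 2)) := by
  have hderiv : ∀ z ∈ Ioi (0:ℝ),
      HasDerivWithinAt (fun z : ℝ => z / 2 + c) (1/2) (Ioi 0) z := by
    intro z hz
    exact (((hasDerivAt_id z).div_const 2).add_const c).hasDerivWithinAt
  have hinj : InjOn (fun z : ℝ => z / 2 + c) (Ioi 0) := fun u _ v _ h => by
    simp only at h; linarith
  have himg : (fun z : ℝ => z / 2 + c) '' Ioi 0 = Ioi c := by
    ext x
    constructor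
    · rintro ⟨z, hz, rfl⟩
      have : (0:ℝ) < z := hz
      simp only [mem_Ioi]; linarith
    · intro hx
      exact ⟨2 * (x - c), by simp only [mem_Ioi] at hx ⊢; linarith, by ring⟩
  have hsub := integral_image_eq_integral_abs_deriv_smul measurableSet_Ioi hderiv hinj
    (fun u => Real.exp (-u ^ 2))
  rw [himg] at hsub
  have e : ∀ z ∈ Ioi (0:ℝ), Real.exp (-(z ^ 2 / 4) - c * z)
      = Real.exp (c ^ 2) * (2 * (|(1:ℝ)/2| • Real.exp (-(z / 2 + c) ^ 2))) := by
    intro z hz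
    rw [smul_eq_mul, abs_of_pos (by norm_num : (0:ℝ) < 1/2)]
    rw [show (2:ℝ) * (1/2 * Real.exp (-(z / 2 + c) ^ 2)) = Real.exp (-(z / 2 + c) ^ 2) by ring]
    rw [← Real.exp_add]
    congr 1
    ring
  rw [setIntegral_congr_fun measurableSet_Ioi e, integral_const_mul, integral_const_mul, ← hsub]
  have hpi : Real.sqrt π ≠ 0 := by positivity
  field_simp


/-- the Laplace transform of
`t ↦ (1/(2π t^{3/2})) ∫₀^∞ z e^{−(z²/4)(1+1/t)} e^{−kz} dz`
at `s > 0` equals `e^{(√s+k)²} erfc(√s + k)`. -/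
theorem stmt6 (k : ℝ) (s : ℝ) (hs : 0 < s) :
    ∫ t in Set.Ioi (0:ℝ),
        Real.exp (-s * t) *
          ((1 / (2 * π * t ^ ((3:ℝ)/2))) *
            ∫ z in Set.Ioi (0:ℝ),
              z * Real.exp (-(z^2/4) * (1 + 1/t)) * Real.exp (-k * z))
      = Real.exp ((Real.sqrt s + k)^2) * erfc (Real.sqrt s + k) := by
  set f : ℝ → ℝ → ℝ := fun t z => Real.exp (-s * t) *
      ((1 / (2 * π * t ^ ((3:ℝ)/2))) *
        (z * Real.exp (-(z^2/4) * (1 + 1/t)) * Real.exp (-k * z))) with hf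
  -- measurability
  have hmeas : Measurable (Function.uncurry f) := by
    apply Measurable.mul
    · exact (measurable_fst.const_mul (-s)).exp
    · apply Measurable.mul
      · exact Measurable.div measurable_const
          ((((Real.continuous_rpow_const (by norm_num : (0:ℝ) ≤ 3/2)).measurable).comp
            measurable_fst).const_mul (2 * π))
      · apply Measurable.mul
        · apply Measurable.mul
          · exact measurable_snd
          · exact (((measurable_snd.pow_const 2).div_const 4).neg.mul
              (Measurable.add measurable_const (measurable_const.div measurable_fst))).exp
        · exact (measurable_snd.const_mul (-k)).exp
  have hπ : (0:ℝ) < π := Real.pi_pos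
  -- integrability on the product space
  have hint : Integrable (Function.uncurry f)
      ((volume.restrict (Ioi 0)).prod (volume.restrict (Ioi 0))) := by
    rw [integrable_prod_iff hmeas.aestronglyMeasurable]
    constructor
    · filter_upwards [ae_restrict_mem measurableSet_Ioi] with t ht
      have ht0 : (0:ℝ) < t := ht
      have hb : (0:ℝ) < (1 + 1/t)/4 := by positivity
      have hfeq : (fun z => f t z) = fun z =>
          (Real.exp (-s*t) * (1 / (2 * π * t ^ ((3:ℝ)/2)))) *
            (z * Real.exp (-((1 + 1/t)/4) * z ^ 2) * Real.exp (-k * z)) := by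
        funext z
        rw [hf]
        simp only
        rw [show -(z^2/4) * (1 + 1/t) = -((1 + 1/t)/4) * z ^ 2 by ring]
        ring
      have : (fun y => Function.uncurry f (t, y)) = fun z => f t z := rfl
      rw [this, hfeq]
      exact (integrableOn_kernel hb).const_mul _
    · have hcore : IntegrableOn (fun t : ℝ => Real.exp (-s*t) * t ^ (-(1:ℝ)/2)) (Ioi 0) := by
        have h0 := Real.GammaIntegral_convergent (by norm_num : (0:ℝ) < 1/2)
        have h1 := (integrableOn_Ioi_comp_mul_left_iff
          (fun x : ℝ => Real.exp (-x) * x ^ ((1:ℝ)/2 - 1)) 0 hs).2 (by rwa [mul_zero])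
        have h2 := h1.const_mul (s ^ ((1:ℝ)/2))
        refine IntegrableOn.congr_fun h2 (fun x hx => ?_) measurableSet_Ioi
        have hx0 : (0:ℝ) < x := hx
        have key : s ^ ((1:ℝ)/2) * s ^ (-(1:ℝ)/2) = 1 := by
          rw [← Real.rpow_add hs]; norm_num
        show s ^ ((1:ℝ)/2) * (Real.exp (-(s*x)) * (s*x) ^ ((1:ℝ)/2 - 1))
            = Real.exp (-s*x) * x ^ (-(1:ℝ)/2)
        rw [show ((1:ℝ)/2 - 1) = (-(1:ℝ)/2) by norm_num,
          Real.mul_rpow hs.le hx0.le, show -s*x = -(s*x) from neg_mul s x,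
          show s ^ ((1:ℝ)/2) * (Real.exp (-(s*x)) * (s ^ (-(1:ℝ)/2) * x ^ (-(1:ℝ)/2)))
            = (s ^ ((1:ℝ)/2) * s ^ (-(1:ℝ)/2)) * (Real.exp (-(s*x)) * x ^ (-(1:ℝ)/2)) by ring,
          key, one_mul]
      have hBint : Integrable
          (fun t => (2 * Real.exp (2*k^2) / π) * (Real.exp (-s*t) * t ^ (-(1:ℝ)/2)))
          (volume.restrict (Ioi 0)) := hcore.const_mul _
      refine Integrable.mono' hBint (hmeas.norm.aestronglyMeasurable.integral_prod_right') ?_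
      filter_upwards [ae_restrict_mem measurableSet_Ioi] with t ht
      have ht0 : (0:ℝ) < t := ht
      rw [Real.norm_eq_abs, abs_of_nonneg (integral_nonneg (fun z => norm_nonneg _))]
      set b := (1 + 1/t)/4 with hbdef
      have hb : (0:ℝ) < b := by positivity
      have hbq : (1:ℝ)/4 ≤ b := by
        rw [hbdef]
        have : (0:ℝ) < 1/t := by positivity
        linarith
      set C := Real.exp (-s*t) * (1 / (2 * π * t ^ ((3:ℝ)/2))) with hCdef
      have hT : (0:ℝ) < t ^ ((3:ℝ)/2) := Real.rpow_pos_of_pos ht0 _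
      have hC : (0:ℝ) ≤ C := by rw [hCdef]; positivity
      have hfeq : (fun z => f t z) = fun z =>
          C * (z * Real.exp (-b * z ^ 2) * Real.exp (-k * z)) := by
        funext z
        rw [hf, hCdef]
        simp only
        rw [show -(z^2/4) * (1 + 1/t) = -((1 + 1/t)/4) * z ^ 2 by ring, ← hbdef]
        ring
      have hnorm : (fun z => ‖f t z‖) = fun z =>
          C * ‖z * Real.exp (-b * z ^ 2) * Real.exp (-k * z)‖ := by
        funext z
        rw [congrFun hfeq z, norm_mul, Real.norm_eq_abs C, abs_of_nonneg hC]
      have hrw0 : (fun z => ‖Function.uncurry f (t, z)‖) = fun z => ‖f t z‖ := rfl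
      rw [show (∫ z in Ioi (0:ℝ), ‖Function.uncurry f (t, z)‖) = ∫ z in Ioi (0:ℝ),
          C * ‖z * Real.exp (-b * z ^ 2) * Real.exp (-k * z)‖ by rw [hrw0, hnorm],
        integral_const_mul]
      have hmono : (∫ z in Ioi (0:ℝ), ‖z * Real.exp (-b * z ^ 2) * Real.exp (-k * z)‖)
          ≤ ∫ z in Ioi (0:ℝ), Real.exp (2*k^2) * (z * Real.exp (-(b/2) * z ^ 2)) := by
        refine integral_mono_of_nonneg (Eventually.of_forall (fun z => norm_nonneg _))
          ((integrableOn_id_mul_exp_neg_mul_sq (half_pos hb)).const_mul _) ?_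
        filter_upwards [ae_restrict_mem measurableSet_Ioi] with z hz
        have hz0 : (0:ℝ) < z := hz
        rw [Real.norm_eq_abs, abs_mul, abs_mul, abs_of_pos hz0,
          abs_of_pos (Real.exp_pos _), abs_of_pos (Real.exp_pos _), mul_assoc, ← Real.exp_add]
        rw [show Real.exp (2*k^2) * (z * Real.exp (-(b/2) * z ^ 2))
            = z * Real.exp (2*k^2 + -(b/2) * z ^ 2) by rw [Real.exp_add]; ring]
        refine mul_le_mul_of_nonneg_left (Real.exp_le_exp.2 ?_) hz0.le
        nlinarith [sq_nonneg (z + 4*k), mul_nonneg (by linarith : (0:ℝ) ≤ b - 1/4) (sq_nonneg z)]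
      have hval : (∫ z in Ioi (0:ℝ), Real.exp (2*k^2) * (z * Real.exp (-(b/2) * z ^ 2)))
          = Real.exp (2*k^2) * (1 / (2 * (b/2))) := by
        rw [integral_const_mul, integral_id_mul_exp_neg_mul_sq (half_pos hb)]
      have hinv : 1 / (2 * (b/2)) ≤ 4 * t := by
        rw [show 2 * (b/2) = b by ring]
        rw [div_le_iff₀ hb]
        rw [hbdef]
        have h1t : (0:ℝ) < 1/t := by positivity
        have : 4 * t * ((1 + 1/t)/4) = t + t * (1/t) := by ring
        rw [this, mul_one_div, div_self (ne_of_gt ht0)]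
        linarith
      calc C * ∫ z in Ioi (0:ℝ), ‖z * Real.exp (-b * z ^ 2) * Real.exp (-k * z)‖
          ≤ C * (Real.exp (2*k^2) * (1 / (2 * (b/2)))) := by
            refine mul_le_mul_of_nonneg_left ?_ hC
            rw [← hval]; exact hmono
        _ ≤ C * (Real.exp (2*k^2) * (4 * t)) := by
            refine mul_le_mul_of_nonneg_left ?_ hC
            exact mul_le_mul_of_nonneg_left hinv (Real.exp_pos _).le
        _ = (2 * Real.exp (2*k^2) / π) * (Real.exp (-s*t) * t ^ (-(1:ℝ)/2)) := by
            rw [hCdef]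
            have hh : t ^ (-(1:ℝ)/2) = t / t ^ ((3:ℝ)/2) := by
              rw [eq_div_iff (ne_of_gt hT), ← Real.rpow_add ht0]
              norm_num
            rw [hh]
            field_simp
            ring
  -- swap the integrals
  have hswap := integral_integral_swap hint
  have lhs_eq : (∫ t in Ioi (0:ℝ), Real.exp (-s * t) * ((1 / (2 * π * t ^ ((3:ℝ)/2))) *
        ∫ z in Ioi (0:ℝ), z * Real.exp (-(z^2/4) * (1 + 1/t)) * Real.exp (-k * z)))
      = ∫ t in Ioi (0:ℝ), ∫ z in Ioi (0:ℝ), f t z := by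
    refine setIntegral_congr_fun measurableSet_Ioi (fun t ht => ?_)
    rw [hf]
    simp only
    rw [integral_const_mul, integral_const_mul]
  rw [lhs_eq, hswap]
  -- compute the inner t-integral for each z
  have inner_eq : ∀ z ∈ Ioi (0:ℝ), (∫ t in Ioi (0:ℝ), f t z)
      = (Real.sqrt π)⁻¹ * Real.exp (-(z^2/4) - (Real.sqrt s + k) * z) := by
    intro z hz
    have hz0 : (0:ℝ) < z := hz
    have step1 : (∫ t in Ioi (0:ℝ), f t z)
        = ∫ t in Ioi (0:ℝ), (z * Real.exp (-(z^2/4)) * Real.exp (-k*z) / (2*π)) *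
            (Real.exp (-s*t) * Real.exp (-z^2/(4*t)) * t ^ (-(3:ℝ)/2)) := by
      refine setIntegral_congr_fun measurableSet_Ioi (fun t ht => ?_)
      have ht0 : (0:ℝ) < t := ht
      have hT : (0:ℝ) < t ^ ((3:ℝ)/2) := Real.rpow_pos_of_pos ht0 _
      have hrw : t ^ (-(3:ℝ)/2) = (t ^ ((3:ℝ)/2))⁻¹ := by
        rw [show (-(3:ℝ)/2) = -((3:ℝ)/2) by norm_num, Real.rpow_neg ht0.le]
      rw [hf]
      simp only
      rw [show -(z^2/4) * (1 + 1/t) = (-(z^2/4)) + (-z^2/(4*t)) by field_simp; ring,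
        Real.exp_add, hrw]
      field_simp
    rw [step1, integral_const_mul, laplace_heat hz0 hs]
    have hπs : Real.sqrt π * Real.sqrt π = π := Real.mul_self_sqrt hπ.le
    have hsπ : (0:ℝ) < Real.sqrt π := Real.sqrt_pos.2 hπ
    rw [show -(z^2/4) - (Real.sqrt s + k) * z = -(z^2/4) + (-(k*z) + -(z * Real.sqrt s)) by ring,
      Real.exp_add, Real.exp_add, show -(k*z) = -k*z by ring]
    field_simp
    linear_combination hπs
  rw [setIntegral_congr_fun measurableSet_Ioi inner_eq, integral_const_mul,
    gauss_shift (Real.sqrt s + k)]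
  show (Real.sqrt π)⁻¹ * (Real.sqrt π * Real.exp ((Real.sqrt s + k) ^ 2) *
      ((2 / Real.sqrt π) * ∫ u in Ioi (Real.sqrt s + k), Real.exp (-u ^ 2)))
    = Real.exp ((Real.sqrt s + k)^2) * erfc (Real.sqrt s + k)
  rw [erfc]
  have hsπ : (0:ℝ) < Real.sqrt π := Real.sqrt_pos.2 hπ
  rw [show (Real.sqrt π)⁻¹ * (Real.sqrt π * Real.exp ((Real.sqrt s + k)^2) *
      ((2 / Real.sqrt π) * ∫ u in Ioi (Real.sqrt s + k), Real.exp (-u ^ 2)))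
    = ((Real.sqrt π)⁻¹ * Real.sqrt π) * (Real.exp ((Real.sqrt s + k)^2) *
      ((2 / Real.sqrt π) * ∫ u in Ioi (Real.sqrt s + k), Real.exp (-u ^ 2))) by ring,
    inv_mul_cancel₀ (ne_of_gt hsπ), one_mul]
end

section
/- For τ > 0 and a_L < 0: (√τ e^{−a_R²τ/2}/√π) ∫₀^∞ e^{−a_L² z/2}/(√z (z+τ)) dz = √π · e^{a_L²τ/2} e^{−a_R²τ/2} · erfc(−a_L√τ/√2). -/
open Real MeasureTheory

open Set in
lemma intA_aux {c : ℝ} (hc : 0 < c) :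
    ∫ z in Ioi (0:ℝ), Real.exp (-(c*z)) / Real.sqrt z = Real.sqrt π / Real.sqrt c := by
  have h : ∀ z ∈ Ioi (0:ℝ), Real.exp (-(c*z)) / Real.sqrt z
      = z ^ ((1/2:ℝ) - 1) * Real.exp (-(c*z)) := by
    intro z hz
    have hz' : (0:ℝ) < z := hz
    rw [show ((1:ℝ)/2 - 1) = -(1/2) by norm_num, Real.rpow_neg hz'.le, ← Real.sqrt_eq_rpow]
    ring
  rw [setIntegral_congr_fun measurableSet_Ioi h,
    Real.integral_rpow_mul_exp_neg_mul_Ioi (by norm_num) hc, Real.Gamma_one_half_eq,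
    ← Real.sqrt_eq_rpow, one_div, Real.sqrt_inv]
  rw [inv_mul_eq_div]

open Set in
lemma intA_int {c : ℝ} (hc : 0 < c) :
    IntegrableOn (fun z => Real.exp (-(c*z)) / Real.sqrt z) (Ioi (0:ℝ)) := by
  have h := integrableOn_rpow_mul_exp_neg_mul_rpow (p := 1) (s := -(1/2)) (b := c)
    (by norm_num) one_pos hc
  refine h.congr_fun (fun x hx => ?_) measurableSet_Ioi
  have hx' : (0:ℝ) < x := hx
  dsimp only
  rw [Real.rpow_one, Real.rpow_neg hx'.le, ← Real.sqrt_eq_rpow, neg_mul]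
  ring

open Set in
lemma intExp_aux {c : ℝ} (hc : 0 < c) :
    ∫ s in Ioi (0:ℝ), Real.exp (-(c*s)) = c⁻¹ := by
  have h := integral_comp_mul_left_Ioi (fun x => Real.exp (-x)) 0 hc
  simpa [mul_zero, integral_exp_neg_Ioi, integral_exp_Iic_zero] using h

open Set in
lemma intB_aux {b τ : ℝ} (hb : 0 < b) (hτ : 0 < τ) :
    ∫ s in Ioi (0:ℝ), Real.exp (-(τ*s)) / Real.sqrt (s + b)
      = 2 * Real.exp (τ*b) * (Real.sqrt τ)⁻¹
          * ∫ x in Ioi (Real.sqrt τ * Real.sqrt b), Real.exp (-x^2) := by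
  have hsb : 0 < Real.sqrt b := Real.sqrt_pos.mpr hb
  have hsτ : 0 < Real.sqrt τ := Real.sqrt_pos.mpr hτ
  have himg : (fun u : ℝ => u^2 - b) '' Ioi (Real.sqrt b) = Ioi 0 := by
    ext y
    constructor
    · rintro ⟨u, hu, rfl⟩
      have hu' : Real.sqrt b < u := hu
      have hsq : b < u^2 := by nlinarith [Real.sq_sqrt hb.le]
      simpa using sub_pos.mpr hsq
    · intro hy
      have hy' : (0:ℝ) < y := hy
      refine ⟨Real.sqrt (y + b), ?_, ?_⟩
      · exact Real.sqrt_lt_sqrt hb.le (by linarith)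
      · simp only
        rw [Real.sq_sqrt (by linarith)]; ring
  have hderiv : ∀ u ∈ Ioi (Real.sqrt b),
      HasDerivWithinAt (fun u : ℝ => u^2 - b) (2*u) (Ioi (Real.sqrt b)) u := by
    intro u _
    have := ((hasDerivAt_pow 2 u).sub_const b).hasDerivWithinAt (s := Ioi (Real.sqrt b))
    simpa using this
  have hinj : Set.InjOn (fun u : ℝ => u^2 - b) (Ioi (Real.sqrt b)) := by
    intro u hu v hv huv
    have hu0 : 0 < u := lt_trans hsb hu
    have hv0 : 0 < v := lt_trans hsb hv
    have h2 : u^2 = v^2 := by simpa using congrArg (· + b) huv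
    calc u = Real.sqrt (u^2) := (Real.sqrt_sq hu0.le).symm
      _ = Real.sqrt (v^2) := by rw [h2]
      _ = v := Real.sqrt_sq hv0.le
  calc ∫ s in Ioi (0:ℝ), Real.exp (-(τ*s)) / Real.sqrt (s + b)
      = ∫ u in Ioi (Real.sqrt b),
          |2*u| • (Real.exp (-(τ*(u^2-b))) / Real.sqrt ((u^2-b) + b)) := by
        rw [← himg, integral_image_eq_integral_abs_deriv_smul measurableSet_Ioi hderiv hinj]
    _ = ∫ u in Ioi (Real.sqrt b),
          (2 * Real.exp (τ*b)) * Real.exp (-(Real.sqrt τ * u)^2) := by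
        apply setIntegral_congr_fun measurableSet_Ioi
        intro u hu
        dsimp only
        have hu0 : 0 < u := lt_trans hsb hu
        have h1 : (u^2 - b) + b = u^2 := by ring
        rw [h1, Real.sqrt_sq hu0.le, smul_eq_mul, abs_of_pos (by positivity),
          mul_pow, Real.sq_sqrt hτ.le,
          show -(τ*(u^2-b)) = τ*b + -(τ*u^2) by ring, Real.exp_add]
        field_simp
    _ = (2 * Real.exp (τ*b)) * ((Real.sqrt τ)⁻¹
          * ∫ x in Ioi (Real.sqrt τ * Real.sqrt b), Real.exp (-x^2)) := by
        rw [integral_const_mul]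
        congr 1
        have := integral_comp_mul_left_Ioi (fun x => Real.exp (-x^2)) (Real.sqrt b) hsτ
        simpa [smul_eq_mul] using this
    _ = _ := by ring

noncomputable def Fk (b τ s z : ℝ) : ℝ :=
  Real.exp (-(τ*s)) * (Real.exp (-((b+s)*z)) / Real.sqrt z)

open Set in
lemma keyJ {b τ : ℝ} (hb : 0 < b) (hτ : 0 < τ) :
    ∫ z in Ioi (0:ℝ), Real.exp (-(b*z)) / (Real.sqrt z * (z + τ))
    = Real.sqrt π * ∫ s in Ioi (0:ℝ), Real.exp (-(τ*s)) / Real.sqrt (s + b) := by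
  have hF : ∀ s z : ℝ, Fk b τ s z
      = Real.exp (-(τ*s)) * (Real.exp (-((b+s)*z)) / Real.sqrt z) := fun s z => rfl
  set F : ℝ → ℝ → ℝ := Fk b τ with hFdef
  have hFnn : ∀ s z, 0 ≤ F s z := by
    intro s z
    rw [hF]
    have h1 : 0 ≤ Real.sqrt z := Real.sqrt_nonneg z
    positivity
  have hmeas : Measurable (Function.uncurry F) := by
    have : Function.uncurry F = fun p : ℝ × ℝ =>
        Real.exp (-(τ*p.1)) * (Real.exp (-((b+p.1)*p.2)) / Real.sqrt p.2) := rfl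
    rw [this]
    apply Measurable.mul
    · exact (Real.measurable_exp.comp (measurable_fst.const_mul τ).neg)
    · exact Measurable.div
        (Real.measurable_exp.comp ((measurable_fst.const_add b).mul measurable_snd).neg)
        (Real.continuous_sqrt.measurable.comp measurable_snd)
  have h1 : AEStronglyMeasurable (Function.uncurry F)
      ((volume.restrict (Ioi (0:ℝ))).prod (volume.restrict (Ioi (0:ℝ)))) :=
    hmeas.aestronglyMeasurable
  have hval : ∀ s ∈ Ioi (0:ℝ), (∫ z in Ioi (0:ℝ), F s z)
      = Real.exp (-(τ*s)) * (Real.sqrt π / Real.sqrt (b+s)) := by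
    intro s hs
    have hbs : 0 < b + s := by have : (0:ℝ) < s := hs; linarith
    simp only [hF]
    rw [integral_const_mul, intA_aux hbs]
  have hFint : Integrable (Function.uncurry F)
      ((volume.restrict (Ioi (0:ℝ))).prod (volume.restrict (Ioi (0:ℝ)))) := by
    rw [MeasureTheory.integrable_prod_iff h1]
    constructor
    · filter_upwards [ae_restrict_mem measurableSet_Ioi] with s hs
      have hbs : 0 < b + s := by have : (0:ℝ) < s := hs; linarith
      have : (fun z => Function.uncurry F (s, z))
          = fun z => Real.exp (-(τ*s)) * (Real.exp (-((b+s)*z)) / Real.sqrt z) := rfl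
      rw [this]
      exact (intA_int hbs).const_mul _
    · have hbnd : IntegrableOn
          (fun s => Real.sqrt π / Real.sqrt b * Real.exp (-(τ*s))) (Ioi (0:ℝ)) := by
        simpa [neg_mul, IntegrableOn] using
          (exp_neg_integrableOn_Ioi 0 hτ).const_mul (Real.sqrt π / Real.sqrt b)
      apply Integrable.mono' hbnd h1.norm.integral_prod_right'
      filter_upwards [ae_restrict_mem measurableSet_Ioi] with s hs
      have hnorm : (fun z => ‖Function.uncurry F (s, z)‖) = fun z => F s z := by
        funext z
        rw [Real.norm_eq_abs]
        exact abs_of_nonneg (hFnn s z)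
      have hbs : 0 < b + s := by have : (0:ℝ) < s := hs; linarith
      calc ‖∫ z in Ioi (0:ℝ), ‖Function.uncurry F (s, z)‖‖
          = ‖∫ z in Ioi (0:ℝ), F s z‖ := by rw [hnorm]
        _ = Real.exp (-(τ*s)) * (Real.sqrt π / Real.sqrt (b+s)) := by
            rw [hval s hs, Real.norm_eq_abs, abs_of_nonneg (by positivity)]
        _ ≤ Real.sqrt π / Real.sqrt b * Real.exp (-(τ*s)) := by
            rw [mul_comm]
            have hs' : (0:ℝ) < s := hs
            gcongr
            linarith
  calc ∫ z in Ioi (0:ℝ), Real.exp (-(b*z)) / (Real.sqrt z * (z + τ))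
      = ∫ z in Ioi (0:ℝ), ∫ s in Ioi (0:ℝ), F s z := by
        apply setIntegral_congr_fun measurableSet_Ioi
        intro z hz
        dsimp only
        have hz0 : (0:ℝ) < z := hz
        have hzτ : 0 < z + τ := by linarith
        have hexp : Real.exp (-(τ*(0:ℝ))) = 1 := by norm_num
        have hcong : ∀ s : ℝ, F s z
            = (Real.exp (-(b*z)) / Real.sqrt z) * Real.exp (-((z+τ)*s)) := by
          intro s
          have hee : Real.exp (-(τ*s)) * Real.exp (-((b+s)*z))
              = Real.exp (-(b*z)) * Real.exp (-((z+τ)*s)) := by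
            rw [← Real.exp_add, ← Real.exp_add]
            ring_nf
          calc F s z = (Real.exp (-(τ*s)) * Real.exp (-((b+s)*z))) / Real.sqrt z := by
                rw [hF]; ring
            _ = (Real.exp (-(b*z)) * Real.exp (-((z+τ)*s))) / Real.sqrt z := by rw [hee]
            _ = (Real.exp (-(b*z)) / Real.sqrt z) * Real.exp (-((z+τ)*s)) := by ring
        rw [show (∫ s in Ioi (0:ℝ), F s z)
            = ∫ s in Ioi (0:ℝ), (Real.exp (-(b*z)) / Real.sqrt z) * Real.exp (-((z+τ)*s))
          from setIntegral_congr_fun measurableSet_Ioi (fun s _ => hcong s),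
          integral_const_mul, intExp_aux hzτ]
        rw [div_mul_eq_div_div, div_eq_mul_inv]
    _ = ∫ s in Ioi (0:ℝ), ∫ z in Ioi (0:ℝ), F s z := (integral_integral_swap hFint).symm
    _ = ∫ s in Ioi (0:ℝ), Real.exp (-(τ*s)) * (Real.sqrt π / Real.sqrt (b+s)) :=
        setIntegral_congr_fun measurableSet_Ioi hval
    _ = Real.sqrt π * ∫ s in Ioi (0:ℝ), Real.exp (-(τ*s)) / Real.sqrt (s + b) := by
        rw [← integral_const_mul]
        apply setIntegral_congr_fun measurableSet_Ioi
        intro s _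
        dsimp only
        rw [add_comm s b]
        ring

/-- integral identity used in the long-time limit. -/
theorem stmt9 (aL aR τ : ℝ) (hτ : 0 < τ) (hL : aL < 0) :
    (Real.sqrt τ * Real.exp (-aR^2 * τ / 2) / Real.sqrt π) *
      ∫ z in Set.Ioi (0:ℝ),
        Real.exp (-aL^2 * z / 2) / (Real.sqrt z * (z + τ))
    = Real.sqrt π * Real.exp (aL^2 * τ / 2) * Real.exp (-aR^2 * τ / 2) *
        erfc (-aL * Real.sqrt τ / Real.sqrt 2) := by
  have haL : aL ≠ 0 := hL.ne
  have hb : 0 < aL^2/2 := by positivity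
  have hπ : 0 < Real.sqrt π := Real.sqrt_pos.mpr Real.pi_pos
  have hsτ : 0 < Real.sqrt τ := Real.sqrt_pos.mpr hτ
  have e1 : (∫ z in Set.Ioi (0:ℝ), Real.exp (-aL^2 * z / 2) / (Real.sqrt z * (z + τ)))
      = ∫ z in Set.Ioi (0:ℝ), Real.exp (-((aL^2/2)*z)) / (Real.sqrt z * (z + τ)) := by
    simp only [show ∀ z : ℝ, -aL^2 * z / 2 = -((aL^2/2)*z) from fun z => by ring]
  have e2 : Real.sqrt τ * Real.sqrt (aL^2/2) = -aL * Real.sqrt τ / Real.sqrt 2 := by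
    rw [Real.sqrt_div (by positivity) 2, Real.sqrt_sq_eq_abs, abs_of_neg hL]
    ring
  rw [e1, keyJ hb hτ, intB_aux hb hτ, e2, erfc,
    show τ * (aL^2/2) = aL^2 * τ / 2 from by ring]
  field_simp
end
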